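/- Define Half-delete Nim positions with n = 2m ≥ 2 heaps as sorted vectors z₁ ≤ z₂ ≤ ⋯ ≤ z_{2m} of positive integers; a move deletes m heaps and splits each of the remaining m heaps into two positive parts. Let 2^s be the smallest power of 2 strictly greater than z_{m+1}. With P-positions defined inductively, the position is a P-position if and only if (a) z₁,…,z_{m+1} are all odd, and (b) for every l, if z_l is even then z_l ≥ 2^s. -/

import Mathlib

inductive NPos {α : Type*} (Move : α → α → Prop) : α → Prop
  | intro {p q : α} : Move p q → (∀ r, Move q r → NPos Move r) → NPos Move p

def PPos {α : Type*} (Move : α → α → Prop) (p : α) : Prop :=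
  ∀ q, Move p q → NPos Move q

/-- A move of Half-delete Nim with `2 * m` heaps: delete `m` heaps (`d`) and
split each of the remaining `m` heaps (recorded in `L` as pairs of positive
parts summing to the original heap) into two heaps. -/
def HalfMove (m : ℕ) (p q : Multiset ℕ) : Prop :=
  ∃ (d : Multiset ℕ) (L : Multiset (ℕ × ℕ)),
    Multiset.card d = m ∧ Multiset.card L = m ∧
    (∀ e ∈ L, 0 < e.1 ∧ 0 < e.2) ∧
    p = d + L.map (fun e => e.1 + e.2) ∧
    q = L.map Prod.fst + L.map Prod.snd

/-!
Let `t` be the `(m+1)`-st smallest heap and `2^s` the least power of two above it. The positions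
in which every even heap is at least `2^s` form a kernel of the move relation, and the claim
follows by induction on the total number of tokens.

No move stays in the kernel: one of the `m + 1` heaps `≤ t` survives; it is odd, so one of its
parts is even and below `2^s`, which forces the new exponent `s'` to be smaller than `s`. But
two of the `m + 1` new heaps `≤ t'` are the two parts of one old heap; both are odd, so that
heap was even and below `2 · 2^{s'} ≤ 2^s`.

Every position outside the kernel has an even heap `v < 2^s`. Keep `v` and `m - 1` heaps of size
at least `2^{s-1} ≤ t`, split `v` into two odd parts below `2^{s-1}` and every other kept heap `y`
into `1` and `y - 1`. The new `t'` is at most the larger part of `v`, and the only heaps that can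
be even are the `y - 1 ≥ 2^{s-1}`.
-/

open Multiset

theorem NPos.not_pPos {α : Type*} {M : α → α → Prop} {p : α} (hn : NPos M p) : ¬ PPos M p := by
  induction hn with
  | intro hpq _ ih =>
    intro hp
    cases hp _ hpq with
    | intro hqr hr => exact ih _ hqr hr

theorem pPos_iff_of_kernel {α : Type*} {M : α → α → Prop} (V S : α → Prop) (f : α → ℕ)
    (hV : ∀ p q, V p → M p q → V q ∧ f q < f p)
    (hS : ∀ p q, V p → S p → M p q → ¬ S q)
    (hnS : ∀ p, V p → ¬ S p → ∃ q, M p q ∧ S q) {p : α} (hp : V p) :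
    PPos M p ↔ S p := by
  induction hn : f p using Nat.strong_induction_on generalizing p with
  | _ n ih =>
    have ih' : ∀ q, M p q → S q → PPos M q := fun q hpq hSq =>
      (ih _ (hn ▸ (hV p q hp hpq).2) (hV p q hp hpq).1 rfl).2 hSq
    constructor
    · intro hP
      by_contra hSp
      obtain ⟨q, hpq, hSq⟩ := hnS p hp hSp
      exact (hP q hpq).not_pPos (ih' q hpq hSq)
    · intro hSp q hpq
      obtain ⟨hq, hfq⟩ := hV p q hp hpq
      obtain ⟨r, hqr, hSr⟩ := hnS q hq (hS p q hp hSp hpq)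
      obtain ⟨hr, hfr⟩ := hV q r hq hqr
      exact .intro hqr ((ih _ (by omega) hr rfl).2 hSr)

theorem List.SortedLE.getElem_le_iff_lt_countP {α : Type*} [LinearOrder α] {l : List α}
    (hl : l.SortedLE) {k : ℕ} (hk : k < l.length) (c : α) :
    l[k] ≤ c ↔ k < l.countP (· ≤ c) := by
  constructor
  · intro h
    have htake : ∀ x ∈ l.take (k + 1), decide (x ≤ c) = true := by
      intro x hx
      obtain ⟨i, hi, rfl⟩ := List.mem_iff_getElem.1 hx
      rw [List.getElem_take, decide_eq_true_eq]
      exact (hl.getElem_le_getElem_of_le (by simp at hi; omega)).trans h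
    calc k < (l.take (k + 1)).length := by simp; omega
      _ = (l.take (k + 1)).countP (· ≤ c) := (List.countP_eq_length.2 htake).symm
      _ ≤ l.countP (· ≤ c) := (List.take_sublist _ _).countP_le
  · intro h
    by_contra! hc
    have hdrop : (l.drop k).countP (· ≤ c) = 0 := by
      rw [List.countP_eq_zero]
      intro x hx
      obtain ⟨i, hi, rfl⟩ := List.mem_iff_getElem.1 hx
      rw [List.getElem_drop, decide_eq_true_eq, not_le]
      exact hc.trans_le (hl.getElem_le_getElem_of_le (by omega))
    have hsplit : l.countP (· ≤ c) = (l.take k).countP (· ≤ c) + 0 := by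
      rw [← hdrop, ← List.countP_append, List.take_append_drop]
    have := (List.countP_le_length (p := (· ≤ c)) (l := l.take k)).trans (List.length_take_le _ _)
    omega

theorem Multiset.exists_le_card_eq {α : Type*} {s : Multiset α} {k : ℕ} (hk : k ≤ card s) :
    ∃ t ≤ s, card t = k := by
  obtain ⟨t, ht⟩ := exists_mem_of_ne_zero (s := powersetCard k s) <| by
    rw [← card_pos, card_powersetCard]; exact Nat.choose_pos hk
  exact ⟨t, (mem_powersetCard.1 ht).1, (mem_powersetCard.1 ht).2⟩

theorem Multiset.countP_add_countP_le_card {α : Type*} {P Q : α → Prop} [DecidablePred P]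
    [DecidablePred Q] {s : Multiset α} (h : ∀ x ∈ s, ¬ (P x ∧ Q x)) :
    countP P s + countP Q s ≤ card s := by
  induction s using Multiset.induction_on with
  | empty => simp
  | cons a s ih =>
    have hs := ih fun x hx => h x (mem_cons_of_mem hx)
    have ha := h a (mem_cons_self a s)
    simp only [countP_cons, card_cons]
    split_ifs <;> first | omega | tauto

theorem Multiset.exists_mem_of_card_lt_countP_add_map {α β : Type*} {P : α → Prop}
    [DecidablePred P] {d : Multiset α} {L : Multiset β} {g : β → α}
    (h : card d < countP P (d + L.map g)) : ∃ e ∈ L, P (g e) := by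
  rw [countP_add] at h
  have := countP_le_card P d
  obtain ⟨_, hx, hPx⟩ := countP_pos.1 (by omega : 0 < countP P (L.map g))
  obtain ⟨e, he, rfl⟩ := mem_map.1 hx
  exact ⟨e, he, hPx⟩

theorem Multiset.exists_mem_of_card_lt_countP_map_fst_add_map_snd {α : Type*} {P : α → Prop}
    [DecidablePred P] {L : Multiset (α × α)}
    (h : card L < countP P (L.map Prod.fst + L.map Prod.snd)) : ∃ e ∈ L, P e.1 ∧ P e.2 := by
  by_contra! hL
  rw [countP_add, countP_map, countP_map, ← countP_eq_card_filter,
    ← countP_eq_card_filter] at h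
  have := countP_add_countP_le_card (P := fun e : α × α => P e.1) (Q := fun e => P e.2)
    fun e he hPe => hL e he hPe.1 hPe.2
  omega

theorem Nat.even_or_even_of_odd_add {a b : ℕ} (h : Odd (a + b)) : Even a ∨ Even b := by
  rcases Nat.even_or_odd a with ha | ha
  · exact .inl ha
  · exact .inr (Nat.odd_add.1 h |>.1 ha)

/-- Zero-indexed, and `0` when `k ≥ card p`. -/
def nthSmallest (p : Multiset ℕ) (k : ℕ) : ℕ := (p.sort (· ≤ ·)).getD k 0

theorem nthSmallest_le_iff {p : Multiset ℕ} {k : ℕ} (hk : k < card p) (c : ℕ) :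
    nthSmallest p k ≤ c ↔ k < countP (· ≤ c) p := by
  have hlen : k < (p.sort (· ≤ ·)).length := by rwa [length_sort]
  rw [nthSmallest, List.getD_eq_getElem _ _ hlen,
    (pairwise_sort p (· ≤ ·)).sortedLE.getElem_le_iff_lt_countP hlen, ← coe_countP, sort_eq]

theorem lt_countP_le_nthSmallest {p : Multiset ℕ} {k : ℕ} (hk : k < card p) :
    k < countP (· ≤ nthSmallest p k) p :=
  (nthSmallest_le_iff hk _).1 le_rfl

theorem card_sub_le_countP_lt {p : Multiset ℕ} {k c : ℕ} (hk : k < card p)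
    (hc : c < nthSmallest p k) : card p - k ≤ countP (c < ·) p := by
  have hle := (nthSmallest_le_iff hk c).not.1 hc.not_ge
  have hsplit := card_eq_countP_add_countP (· ≤ c) p
  simp only [not_le] at hsplit
  omega

theorem nthSmallest_map_univ {n : ℕ} {z : Fin n → ℕ} (hz : Monotone z) (k : Fin n) :
    nthSmallest (Finset.univ.val.map z) k = z k := by
  have hsort : (Finset.univ.val.map z).sort (· ≤ ·) = List.ofFn z := by
    refine List.Perm.eq_of_sortedLE (pairwise_sort _ _).sortedLE hz.sortedLE_ofFn
      (coe_eq_coe.1 ?_)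
    rw [sort_eq, Fin.univ_val_map]
  rw [nthSmallest, hsort, List.getD_eq_getElem _ _ (by simp), List.getElem_ofFn]

theorem exists_le_erase_card_eq_of_lt_nthSmallest {m c v : ℕ} {p : Multiset ℕ}
    (hcard : card p = 2 * m) (hv : v ∈ p) (hc : c < nthSmallest p m) :
    ∃ K ≤ p.erase v, card K = m - 1 ∧ ∀ y ∈ K, c < y := by
  have hmany : m - 1 ≤ countP (c < ·) (p.erase v) := by
    have hm : m < card p := by have := card_pos_iff_exists_mem.2 ⟨v, hv⟩; omega
    have hp := card_sub_le_countP_lt hm hc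
    have hcons := countP_cons (c < ·) v (p.erase v)
    rw [cons_erase hv] at hcons
    split_ifs at hcons <;> omega
  obtain ⟨K, hK, hKcard⟩ := exists_le_card_eq (s := (p.erase v).filter (c < ·)) (k := m - 1)
    (by rwa [← countP_eq_card_filter])
  exact ⟨K, hK.trans (filter_le _ _), hKcard, fun y hy => (mem_filter.1 (mem_of_le hK hy)).2⟩

namespace HalfMove

variable {m : ℕ} {p q : Multiset ℕ}

theorem of_map_le (L : Multiset (ℕ × ℕ)) (hpos : ∀ e ∈ L, 0 < e.1 ∧ 0 < e.2)
    (hle : L.map (fun e => e.1 + e.2) ≤ p) (hcard : card p = 2 * card L) :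
    HalfMove (card L) p (L.map Prod.fst + L.map Prod.snd) := by
  classical
  refine ⟨p - L.map (fun e => e.1 + e.2), L, ?_, rfl, hpos, (tsub_add_cancel_of_le hle).symm, rfl⟩
  rw [card_sub hle, card_map]
  omega

theorem card_eq (h : HalfMove m p q) : card q = 2 * m := by
  obtain ⟨_, L, -, hL, -, -, rfl⟩ := h
  simp only [card_add, card_map, hL]
  omega

theorem pos_of_mem (h : HalfMove m p q) {x : ℕ} (hx : x ∈ q) : 0 < x := by
  obtain ⟨_, L, -, -, hpos, -, rfl⟩ := h
  rcases mem_add.1 hx with hx | hx <;> obtain ⟨e, he, rfl⟩ := mem_map.1 hx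
  exacts [(hpos e he).1, (hpos e he).2]

theorem sum_lt (hm : 1 ≤ m) (hp : ∀ x ∈ p, 0 < x) (h : HalfMove m p q) : q.sum < p.sum := by
  obtain ⟨d, L, hd, -, -, rfl, rfl⟩ := h
  obtain ⟨x, hx⟩ := card_pos_iff_exists_mem.1 (by omega : 0 < card d)
  have hxd := le_sum_of_mem hx
  have hx0 := hp x (mem_add.2 (.inl hx))
  simp only [sum_add, ← sum_map_add]
  omega

theorem split_one_and_rest {K : Multiset ℕ} {v c : ℕ} (hm : 1 ≤ m)
    (hcard : card p = 2 * m) (hv : v ∈ p) (hc : 0 < c) (hcv : c < v) (hK : K ≤ p.erase v)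
    (hKcard : card K = m - 1) (hK2 : ∀ y ∈ K, 2 ≤ y) :
    HalfMove m p ((v - c) ::ₘ c ::ₘ (replicate (m - 1) 1 + K.map (· - 1))) := by
  set L := (v - c, c) ::ₘ K.map fun y => (1, y - 1)
  have hLcard : card L = m := by simp only [L, card_cons, card_map, hKcard]; omega
  have hpos : ∀ e ∈ L, 0 < e.1 ∧ 0 < e.2 := by
    simp only [L, mem_cons, mem_map]
    rintro e (rfl | ⟨y, hy, rfl⟩)
    · exact ⟨by omega, hc⟩
    · exact ⟨one_pos, by have := hK2 y hy; omega⟩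
  have hsum : L.map (fun e => e.1 + e.2) = v ::ₘ K := by
    simp only [L, map_cons, map_map]
    congr 1
    · omega
    · exact (map_congr rfl fun y hy => by have := hK2 y hy; simp; omega).trans (map_id K)
  have hle : L.map (fun e => e.1 + e.2) ≤ p := by
    rw [hsum, ← cons_erase hv]
    exact cons_le_cons v hK
  have hmove := of_map_le L hpos hle (by omega)
  rw [hLcard] at hmove
  convert hmove using 1
  simp [L, hKcard, cons_swap]

end HalfMove

/-- `nthSmallest p m` is the paper's `z_{m+1}`. -/
def EvenHeapsLarge (m : ℕ) (p : Multiset ℕ) : Prop :=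
  ∀ x ∈ p, Even x → 2 ^ (nthSmallest p m).size ≤ x

namespace EvenHeapsLarge

variable {m : ℕ} {p q : Multiset ℕ}

theorem odd_of_le (h : EvenHeapsLarge m p) {x : ℕ} (hx : x ∈ p) (hxt : x ≤ nthSmallest p m) :
    Odd x := by
  by_contra hodd
  have := h x hx (Nat.not_odd_iff_even.1 hodd)
  have := Nat.lt_size_self (nthSmallest p m)
  omega

theorem not_of_halfMove (hm : 1 ≤ m) (hcard : card p = 2 * m) (hp : EvenHeapsLarge m p)
    (hmv : HalfMove m p q) : ¬ EvenHeapsLarge m q := by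
  intro hq
  have hcq := hmv.card_eq
  obtain ⟨d, L, hd, hL, hpos, rfl, rfl⟩ := hmv
  set t := nthSmallest (d + L.map fun e => e.1 + e.2) m
  set t' := nthSmallest (L.map Prod.fst + L.map Prod.snd) m
  have ht := Nat.lt_size_self t
  have ht' := Nat.lt_size_self t'
  have hlow : card d < countP (· ≤ t) (d + L.map fun e => e.1 + e.2) :=
    hd ▸ lt_countP_le_nthSmallest (by rw [card_add, card_map]; omega)
  obtain ⟨e, he, het⟩ := exists_mem_of_card_lt_countP_add_map hlow
  have hodd := hp.odd_of_le (mem_add.2 (.inr (mem_map_of_mem _ he))) het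
  have hsize : t'.size < t.size := by
    obtain ⟨w, hw, hwe, hwt⟩ : ∃ w ∈ L.map Prod.fst + L.map Prod.snd, Even w ∧ w < 2 ^ t.size := by
      rcases Nat.even_or_even_of_odd_add hodd with h1 | h2
      · exact ⟨e.1, mem_add.2 (.inl (mem_map_of_mem _ he)), h1, by have := hpos e he; omega⟩
      · exact ⟨e.2, mem_add.2 (.inr (mem_map_of_mem _ he)), h2, by have := hpos e he; omega⟩
    exact (Nat.pow_lt_pow_iff_right one_lt_two).1 ((hq w hw hwe).trans_lt hwt)
  have hlow' : card L < countP (· ≤ t') (L.map Prod.fst + L.map Prod.snd) :=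
    hL ▸ lt_countP_le_nthSmallest (by omega)
  obtain ⟨f, hf, hf1, hf2⟩ := exists_mem_of_card_lt_countP_map_fst_add_map_snd hlow'
  have hodd1 := hq.odd_of_le (mem_add.2 (.inl (mem_map_of_mem _ hf))) hf1
  have hodd2 := hq.odd_of_le (mem_add.2 (.inr (mem_map_of_mem _ hf))) hf2
  have hbig : 2 ^ t.size ≤ f.1 + f.2 :=
    hp _ (mem_add.2 (.inr (mem_map_of_mem _ hf))) (hodd1.add_odd hodd2)
  have hpow : 2 ^ (t'.size + 1) ≤ 2 ^ t.size := Nat.pow_le_pow_right two_pos hsize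
  rw [pow_succ] at hpow
  omega

end EvenHeapsLarge

theorem exists_halfMove_evenHeapsLarge {m : ℕ} {p : Multiset ℕ} (hm : 1 ≤ m)
    (hcard : card p = 2 * m) (hpos : ∀ x ∈ p, 0 < x) (h : ¬ EvenHeapsLarge m p) :
    ∃ q, HalfMove m p q ∧ EvenHeapsLarge m q := by
  simp only [EvenHeapsLarge, not_forall, not_le, exists_prop] at h
  obtain ⟨v, hv, hve, hvt⟩ := h
  set s := (nthSmallest p m).size
  have hv2 : 2 ≤ v := by have := hpos v hv; rw [Nat.even_iff] at hve; omega
  have hs : 2 ≤ s := by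
    by_contra! hs
    have : 2 ^ s ≤ 2 ^ 1 := Nat.pow_le_pow_right two_pos (by omega)
    omega
  set X := 2 ^ (s - 1)
  have hX : 2 * X = 2 ^ s := by rw [← pow_succ']; congr 1; omega
  have hXt : X ≤ nthSmallest p m := Nat.lt_size.1 (by omega)
  have hXe : X % 2 = 0 := Nat.even_iff.1 ((Nat.even_pow' (by omega)).2 even_two)
  rw [Nat.even_iff] at hve
  obtain ⟨K, hK, hKcard, hKX⟩ :=
    exists_le_erase_card_eq_of_lt_nthSmallest hcard hv (show X - 1 < nthSmallest p m by omega)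
  -- `c` and `v - c` are odd (`v` and `X` are even) and at most `c < X`, as `v < 2 * X`.
  set c := min (v - 1) (X - 1)
  have hmove := HalfMove.split_one_and_rest hm hcard hv (c := c) (by omega) (by omega)
    hK hKcard fun y hy => by have := hKX y hy; omega
  refine ⟨_, hmove, ?_⟩
  set q := (v - c) ::ₘ c ::ₘ (replicate (m - 1) 1 + K.map (· - 1))
  have hqc : nthSmallest q m ≤ c := by
    rw [nthSmallest_le_iff (by rw [hmove.card_eq]; omega)]
    have hones : countP (· ≤ c) (replicate (m - 1) 1) = m - 1 := by
      rw [countP_eq_card.2 fun a ha => by rw [eq_of_mem_replicate ha]; omega, card_replicate]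
    simp only [q, countP_cons, countP_add, hones, if_pos (le_refl c),
      if_pos (show v - c ≤ c by omega)]
    omega
  have hqX : 2 ^ (nthSmallest q m).size ≤ X :=
    Nat.pow_le_pow_right two_pos (Nat.size_le.2 (by omega))
  intro x hx hxe
  rw [Nat.even_iff] at hxe
  simp only [q, mem_cons, mem_add, mem_replicate, mem_map] at hx
  rcases hx with rfl | rfl | ⟨-, rfl⟩ | ⟨y, hy, rfl⟩
  · omega
  · omega
  · omega
  · have := hKX y hy
    omega

theorem pPos_halfMove_iff_evenHeapsLarge {m : ℕ} (hm : 1 ≤ m) {p : Multiset ℕ}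
    (hcard : card p = 2 * m) (hpos : ∀ x ∈ p, 0 < x) :
    PPos (HalfMove m) p ↔ EvenHeapsLarge m p :=
  pPos_iff_of_kernel (fun p => card p = 2 * m ∧ ∀ x ∈ p, 0 < x) _ Multiset.sum
    (fun _ _ hp hmv => ⟨⟨hmv.card_eq, fun _ => hmv.pos_of_mem⟩, HalfMove.sum_lt hm hp.2 hmv⟩)
    (fun _ _ hp => EvenHeapsLarge.not_of_halfMove hm hp.1)
    (fun _ hp => exists_halfMove_evenHeapsLarge hm hp.1 hp.2) ⟨hcard, hpos⟩

/-- Zero-indexed: `z ⟨m, _⟩` is the paper's `z_{m+1}`, and `2 ^ Nat.size n` is the least power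
of two exceeding `n`. -/
theorem stmt15 (m : ℕ) (hm : 1 ≤ m) (z : Fin (2 * m) → ℕ)
    (hpos : ∀ i, 0 < z i) (hmono : Monotone z) :
    PPos (HalfMove m) (Finset.univ.val.map z) ↔
      ((∀ i : Fin (2 * m), (i : ℕ) ≤ m → Odd (z i)) ∧
       ∀ i : Fin (2 * m), Even (z i) →
         2 ^ Nat.size (z ⟨m, by omega⟩) ≤ z i) := by
  have hmem : ∀ i, z i ∈ Finset.univ.val.map z := fun i => mem_map_of_mem z (Finset.mem_univ i)
  have hpivot := nthSmallest_map_univ hmono ⟨m, by omega⟩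
  rw [pPos_halfMove_iff_evenHeapsLarge hm (by simp) (by simpa using hpos)]
  constructor
  · intro h
    refine ⟨fun i hi => h.odd_of_le (hmem i) (hpivot ▸ hmono hi), fun i hev => ?_⟩
    exact hpivot ▸ h _ (hmem i) hev
  · rintro ⟨-, h⟩ x hx hev
    obtain ⟨i, -, rfl⟩ := mem_map.1 hx
    exact hpivot ▸ h i hev
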